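/- Let p be a prime and r ≤ s non-negative integers. Then the ratio (number of ideals of ℤ_{p^r} × ℤ_{p^s}) / (number of additive subgroups of ℤ_{p^r} × ℤ_{p^s}), as a rational number, equals (r+1)(s+1)(p−1)² / ( p^{r+1}·[(s − r + 1)(p − 1) + 2] − [(s + r + 3)(p − 1) + 2] ). -/

import Mathlib

/-!
Ideals of `ZMod M × ZMod N` are products of ideals, and the ideals of `ZMod N` are its additive
subgroups `⟨d⟩`, one for each divisor `d ∣ N`. An additive subgroup `H ≤ ZMod M × ZMod N` is
determined by its projection `⟨d⟩` to the first factor, its intersection `⟨e⟩` with the second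
factor, and the residue `c mod e` of the second coordinate of any element of `H` lying over `d`.
The residues that occur are those with `e ∣ (M / d) c`, since `(M / d) • (d, c) = (0, (M / d) c)`;
there are `gcd (M / d) e` of them. For `M = p ^ r`, `N = p ^ s` this counts
`∑_{k ≤ r} ∑_{j ≤ s} p ^ min k j` subgroups, and summing the geometric series shows that this
number times `(p - 1) ^ 2` is the denominator of the formula.
-/

open Finset AddSubgroup

theorem Nat.dvd_mul_iff_div_gcd_dvd {a e c : ℕ} (he : 0 < e) : e ∣ a * c ↔ e / a.gcd e ∣ c := by
  have hg : 0 < a.gcd e := Nat.gcd_pos_of_pos_right a he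
  have key : e / a.gcd e * a.gcd e ∣ a / a.gcd e * c * a.gcd e ↔ e / a.gcd e ∣ a / a.gcd e * c :=
    Nat.mul_dvd_mul_iff_right hg
  rwa [Nat.div_mul_cancel (Nat.gcd_dvd_right a e), mul_right_comm,
    Nat.div_mul_cancel (Nat.gcd_dvd_left a e), (Nat.coprime_div_gcd_div_gcd hg).symm.dvd_mul_left]
    at key

theorem Nat.card_filter_range_dvd (g : ℕ) {k : ℕ} (hk : 0 < k) :
    #{c ∈ range (g * k) | k ∣ c} = g := by
  have : {c ∈ range (g * k) | k ∣ c} = (range g).image (· * k) := by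
    ext c
    simp only [mem_filter, mem_range, mem_image]
    constructor
    · rintro ⟨hc, t, rfl⟩
      exact ⟨t, Nat.lt_of_mul_lt_mul_right (by rwa [mul_comm] at hc), mul_comm _ _⟩
    · rintro ⟨t, ht, rfl⟩
      exact ⟨Nat.mul_lt_mul_of_pos_right ht hk, dvd_mul_left _ _⟩
  rw [this, Finset.card_image_of_injective _ (mul_left_injective₀ hk.ne'), card_range]

theorem Nat.card_filter_range_dvd_mul (a : ℕ) {e : ℕ} (he : 0 < e) :
    #{c ∈ range e | e ∣ a * c} = a.gcd e := by
  have hk : 0 < e / a.gcd e :=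
    Nat.div_pos (Nat.le_of_dvd he (Nat.gcd_dvd_right a e)) (Nat.gcd_pos_of_pos_right a he)
  have h := Nat.card_filter_range_dvd (a.gcd e) hk
  rwa [Nat.mul_div_cancel' (Nat.gcd_dvd_right a e),
    ← filter_congr fun c _ => Nat.dvd_mul_iff_div_gcd_dvd he] at h

theorem Nat.gcd_pow_pow (p a b : ℕ) : (p ^ a).gcd (p ^ b) = p ^ min a b := by
  rcases le_total a b with h | h
  · rw [min_eq_left h, Nat.gcd_eq_left (pow_dvd_pow p h)]
  · rw [min_eq_right h, Nat.gcd_eq_right (pow_dvd_pow p h)]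

theorem Nat.card_divisors_prime_pow {p : ℕ} (hp : p.Prime) (k : ℕ) : #(p ^ k).divisors = k + 1 := by
  rw [Nat.divisors_prime_pow hp, card_map, card_range]

section Prod

variable {A B : Type*} [AddCommGroup A] [AddCommGroup B]

theorem AddSubgroup.map_fst_zmultiples_sup_map_inr (a : A) (b : B) (K : AddSubgroup B) :
    (zmultiples (a, b) ⊔ K.map (AddMonoidHom.inr A B)).map (AddMonoidHom.fst A B) =
      zmultiples a := by
  rw [map_sup, AddMonoidHom.map_zmultiples, map_map, AddMonoidHom.fst_comp_inr, map_zero_eq_bot,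
    sup_bot_eq]
  rfl

theorem AddSubgroup.comap_inr_zmultiples_sup_map_inr {a : A} {b : B} {K : AddSubgroup B}
    (h : addOrderOf a • b ∈ K) :
    (zmultiples (a, b) ⊔ K.map (AddMonoidHom.inr A B)).comap (AddMonoidHom.inr A B) = K := by
  refine le_antisymm (fun y hy => ?_) fun y hy => mem_sup_right (mem_map_of_mem _ hy)
  obtain ⟨_, ⟨k, rfl⟩, _, ⟨z, hz, rfl⟩, hsum⟩ := mem_sup.1 hy
  have hka : k • a = 0 := by simpa using congrArg Prod.fst hsum
  have hy : y = k • b + z := by simpa using (congrArg Prod.snd hsum).symm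
  obtain ⟨l, rfl⟩ := addOrderOf_dvd_iff_zsmul_eq_zero.2 hka
  rw [hy, mul_comm, mul_zsmul, natCast_zsmul]
  exact add_mem (zsmul_mem h l) hz

theorem AddSubgroup.eq_zmultiples_sup_map_comap_inr {H : AddSubgroup (A × B)} {a : A} {b : B}
    (hfst : H.map (AddMonoidHom.fst A B) = zmultiples a) (hab : (a, b) ∈ H) :
    H = zmultiples (a, b) ⊔ (H.comap (AddMonoidHom.inr A B)).map (AddMonoidHom.inr A B) := by
  refine le_antisymm (fun ⟨x, y⟩ hxy => ?_) (sup_le (zmultiples_le.2 hab) (map_comap_le _ _))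
  obtain ⟨k, hk⟩ : x ∈ zmultiples a := hfst ▸ mem_map_of_mem _ hxy
  refine mem_sup.2 ⟨k • (a, b), zsmul_mem (mem_zmultiples _) k, (0, y - k • b),
    ⟨y - k • b, ?_, rfl⟩, by simp [hk]⟩
  have : (x, y) - k • (a, b) = (0, y - k • b) := by simp [hk]
  simpa [← this] using sub_mem hxy (zsmul_mem hab k)

end Prod

namespace ZMod

variable {M N : ℕ}

theorem intCast_mem_zmultiples_natCast_iff {d : ℕ} (hd : d ∣ N) (x : ℤ) :
    (x : ZMod N) ∈ zmultiples (d : ZMod N) ↔ (d : ℤ) ∣ x := by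
  constructor
  · rintro ⟨k, hk⟩
    have hN : (N : ℤ) ∣ x - k * d := by
      rw [← ZMod.intCast_eq_intCast_iff_dvd_sub, ← hk]
      simp
    simpa using (Int.natCast_dvd_natCast.2 hd).trans hN |>.add (dvd_mul_left (d : ℤ) k)
  · rintro ⟨k, rfl⟩
    exact ⟨k, by simp [mul_comm]⟩

theorem natCast_mem_zmultiples_natCast_iff {d : ℕ} (hd : d ∣ N) (x : ℕ) :
    (x : ZMod N) ∈ zmultiples (d : ZMod N) ↔ d ∣ x := by
  rw [← Int.natCast_dvd_natCast, ← intCast_mem_zmultiples_natCast_iff hd, Int.cast_natCast]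

theorem eq_of_zmultiples_natCast_eq {d d' : ℕ} (hd : d ∣ N) (hd' : d' ∣ N)
    (h : zmultiples (d : ZMod N) = zmultiples (d' : ZMod N)) : d = d' :=
  Nat.dvd_antisymm ((natCast_mem_zmultiples_natCast_iff hd d').1 (h ▸ mem_zmultiples _))
    ((natCast_mem_zmultiples_natCast_iff hd' d).1 (h ▸ mem_zmultiples _))

theorem exists_dvd_eq_zmultiples_natCast (H : AddSubgroup (ZMod N)) :
    ∃ d, d ∣ N ∧ H = zmultiples (d : ZMod N) := by
  let f := Int.castAddHom (ZMod N)
  obtain ⟨k, hk⟩ := Int.subgroup_cyclic (H.comap f)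
  rw [← zmultiples_eq_closure, ← Int.zmultiples_natAbs] at hk
  have hN : (N : ℤ) ∈ H.comap f := by simp [f]
  refine ⟨k.natAbs, Int.natCast_dvd_natCast.1 ?_, ?_⟩
  · rwa [hk, Int.mem_zmultiples_iff] at hN
  · rw [← map_comap_eq_self_of_surjective (f := f) ZMod.intCast_surjective H, hk,
      AddMonoidHom.map_zmultiples]
    simp [f]

theorem card_addSubgroup (hN : N ≠ 0) : Nat.card (AddSubgroup (ZMod N)) = #N.divisors := by
  have hbij : Function.Bijective fun d : N.divisors => zmultiples ((d : ℕ) : ZMod N) := by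
    refine ⟨fun d d' h => Subtype.ext <| eq_of_zmultiples_natCast_eq
      (Nat.dvd_of_mem_divisors d.2) (Nat.dvd_of_mem_divisors d'.2) h, fun H => ?_⟩
    obtain ⟨d, hd, rfl⟩ := exists_dvd_eq_zmultiples_natCast H
    exact ⟨⟨d, Nat.mem_divisors.2 ⟨hd, hN⟩⟩, rfl⟩
  rw [← Nat.card_eq_of_bijective _ hbij, Nat.card_eq_finsetCard]

theorem card_ideal (hN : N ≠ 0) : Nat.card (Ideal (ZMod N)) = #N.divisors :=
  (Nat.card_congr (AddSubgroup.toZModSubmodule N).symm.toEquiv).trans (card_addSubgroup hN)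

theorem card_ideal_prod (hM : M ≠ 0) (hN : N ≠ 0) :
    Nat.card (Ideal (ZMod M × ZMod N)) = #M.divisors * #N.divisors := by
  rw [Nat.card_congr Ideal.idealProdEquiv.toEquiv, Nat.card_prod, card_ideal hM, card_ideal hN]

theorem addOrderOf_natCast_of_dvd {d : ℕ} (hN : N ≠ 0) (hd : d ∣ N) :
    addOrderOf (d : ZMod N) = N / d := by
  rw [addOrderOf_coe d hN, Nat.gcd_eq_right hd]

def prodAddSubgroup (M N d e c : ℕ) : AddSubgroup (ZMod M × ZMod N) :=
  zmultiples ((d : ZMod M), (c : ZMod N)) ⊔ (zmultiples (e : ZMod N)).map (AddMonoidHom.inr _ _)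

def prodAddSubgroupParams (M N : ℕ) : Finset (Σ _ : ℕ × ℕ, ℕ) :=
  (M.divisors ×ˢ N.divisors).sigma fun de => {c ∈ range de.2 | de.2 ∣ M / de.1 * c}

theorem mem_prodAddSubgroupParams {d e c : ℕ} :
    ⟨(d, e), c⟩ ∈ prodAddSubgroupParams M N ↔
      (d ∣ M ∧ M ≠ 0) ∧ (e ∣ N ∧ N ≠ 0) ∧ c < e ∧ e ∣ M / d * c := by
  simp [prodAddSubgroupParams, Nat.mem_divisors, and_assoc]

theorem map_fst_prodAddSubgroup (d e c : ℕ) :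
    (prodAddSubgroup M N d e c).map (AddMonoidHom.fst _ _) = zmultiples (d : ZMod M) :=
  map_fst_zmultiples_sup_map_inr _ _ _

theorem comap_inr_prodAddSubgroup {d e c : ℕ} (hM : M ≠ 0) (hd : d ∣ M) (he : e ∣ N)
    (hc : e ∣ M / d * c) :
    (prodAddSubgroup M N d e c).comap (AddMonoidHom.inr _ _) = zmultiples (e : ZMod N) := by
  refine comap_inr_zmultiples_sup_map_inr ?_
  rw [addOrderOf_natCast_of_dvd hM hd, nsmul_eq_mul, ← Nat.cast_mul]
  exact (natCast_mem_zmultiples_natCast_iff he _).2 hc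

theorem prodAddSubgroup_injOn :
    Set.InjOn (fun x : Σ _ : ℕ × ℕ, ℕ => prodAddSubgroup M N x.1.1 x.1.2 x.2)
      (prodAddSubgroupParams M N) := by
  rintro ⟨⟨d, e⟩, c⟩ hx ⟨⟨d', e'⟩, c'⟩ hx' h
  obtain ⟨⟨hd, hM⟩, ⟨he, -⟩, hce, hc⟩ := mem_prodAddSubgroupParams.1 hx
  obtain ⟨⟨hd', -⟩, ⟨he', -⟩, hce', hc'⟩ := mem_prodAddSubgroupParams.1 hx'
  simp only at h
  obtain rfl : d = d' := eq_of_zmultiples_natCast_eq hd hd' <| by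
    rw [← map_fst_prodAddSubgroup d e c, h, map_fst_prodAddSubgroup]
  obtain rfl : e = e' := eq_of_zmultiples_natCast_eq he he' <| by
    rw [← comap_inr_prodAddSubgroup hM hd he hc, h, comap_inr_prodAddSubgroup hM hd he' hc']
  have hsub : ((0 : ZMod M), ((c - c' : ℤ) : ZMod N)) ∈ prodAddSubgroup M N d e c' := by
    have hdc : ((d : ZMod M), (c : ZMod N)) ∈ prodAddSubgroup M N d e c' :=
      h ▸ mem_sup_left (mem_zmultiples _)
    simpa using sub_mem hdc (mem_sup_left (mem_zmultiples _))
  rw [← AddMonoidHom.inr_apply, ← mem_comap, comap_inr_prodAddSubgroup hM hd he hc',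
    intCast_mem_zmultiples_natCast_iff he, ← Nat.modEq_iff_dvd] at hsub
  rw [hsub.eq_of_lt_of_lt hce' hce]

theorem exists_prodAddSubgroup_eq (hM : M ≠ 0) (hN : N ≠ 0) (H : AddSubgroup (ZMod M × ZMod N)) :
    ∃ x ∈ prodAddSubgroupParams M N, prodAddSubgroup M N x.1.1 x.1.2 x.2 = H := by
  obtain ⟨d, hd, hfst⟩ := exists_dvd_eq_zmultiples_natCast (H.map (AddMonoidHom.fst _ _))
  obtain ⟨e, he, hinr⟩ := exists_dvd_eq_zmultiples_natCast (H.comap (AddMonoidHom.inr _ _))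
  have : NeZero N := ⟨hN⟩
  have he0 : 0 < e := Nat.pos_of_dvd_of_pos he (Nat.pos_of_ne_zero hN)
  obtain ⟨⟨_, y⟩, hdy, rfl⟩ : (d : ZMod M) ∈ H.map (AddMonoidHom.fst _ _) :=
    hfst ▸ mem_zmultiples _
  set c := y.val % e
  have hdc : ((d : ZMod M), (c : ZMod N)) ∈ H := by
    have hyc : y - c ∈ H.comap (AddMonoidHom.inr _ _) := by
      have := (natCast_mem_zmultiples_natCast_iff he _).2 (Nat.dvd_sub_mod y.val)
      rwa [Nat.cast_sub (Nat.mod_le _ _), ZMod.natCast_zmod_val, ← hinr] at this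
    simpa using sub_mem hdy hyc
  have hc : e ∣ M / d * c := by
    have hmem : ((M / d * c : ℕ) : ZMod N) ∈ H.comap (AddMonoidHom.inr _ _) := by
      have := nsmul_mem hdc (M / d)
      rwa [← addOrderOf_natCast_of_dvd hM hd, Prod.smul_mk, addOrderOf_nsmul_eq_zero,
        addOrderOf_natCast_of_dvd hM hd, nsmul_eq_mul, ← Nat.cast_mul] at this
    rwa [hinr, natCast_mem_zmultiples_natCast_iff he] at hmem
  refine ⟨⟨(d, e), c⟩, mem_prodAddSubgroupParams.2
    ⟨⟨hd, hM⟩, ⟨he, hN⟩, Nat.mod_lt _ he0, hc⟩, ?_⟩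
  rw [eq_zmultiples_sup_map_comap_inr hfst hdc, hinr]
  rfl

theorem card_addSubgroup_prod (hM : M ≠ 0) (hN : N ≠ 0) :
    Nat.card (AddSubgroup (ZMod M × ZMod N)) =
      ∑ d ∈ M.divisors, ∑ e ∈ N.divisors, (M / d).gcd e := by
  have hbij : Function.Bijective fun x : prodAddSubgroupParams M N =>
      prodAddSubgroup M N x.1.1.1 x.1.1.2 x.1.2 := by
    refine ⟨fun x y h => Subtype.ext (prodAddSubgroup_injOn x.2 y.2 h), fun H => ?_⟩
    obtain ⟨x, hx, rfl⟩ := exists_prodAddSubgroup_eq hM hN H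
    exact ⟨⟨x, hx⟩, rfl⟩
  rw [← Nat.card_eq_of_bijective _ hbij, Nat.card_eq_finsetCard, prodAddSubgroupParams,
    card_sigma, sum_product]
  exact sum_congr rfl fun d _ => sum_congr rfl fun e he =>
    Nat.card_filter_range_dvd_mul _ (Nat.pos_of_mem_divisors he)

theorem card_ideal_prod_prime_pow {p : ℕ} (hp : p.Prime) (r s : ℕ) :
    Nat.card (Ideal (ZMod (p ^ r) × ZMod (p ^ s))) = (r + 1) * (s + 1) := by
  rw [card_ideal_prod (pow_ne_zero _ hp.ne_zero) (pow_ne_zero _ hp.ne_zero),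
    Nat.card_divisors_prime_pow hp, Nat.card_divisors_prime_pow hp]

theorem card_addSubgroup_prod_prime_pow {p : ℕ} (hp : p.Prime) (r s : ℕ) :
    Nat.card (AddSubgroup (ZMod (p ^ r) × ZMod (p ^ s))) =
      ∑ k ∈ range (r + 1), ∑ j ∈ range (s + 1), p ^ min k j := by
  rw [card_addSubgroup_prod (pow_ne_zero _ hp.ne_zero) (pow_ne_zero _ hp.ne_zero),
    Nat.sum_divisors_prime_pow hp, ← sum_range_reflect]
  refine sum_congr rfl fun k hk => ?_
  rw [Nat.sum_divisors_prime_pow hp, Nat.pow_div (by omega) hp.pos]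
  refine sum_congr rfl fun j _ => ?_
  rw [Nat.gcd_pow_pow, show r - (r + 1 - 1 - k) = k by have := mem_range.1 hk; omega]

end ZMod

theorem sum_range_pow_min_mul_sub_one {R : Type*} [CommRing R] (x : R) {k s : ℕ} (hks : k ≤ s) :
    (∑ j ∈ range (s + 1), x ^ min k j) * (x - 1) =
      x ^ k * (((s - k : ℕ) + 1) * (x - 1) + 1) - 1 := by
  induction s, hks using Nat.le_induction with
  | base =>
    rw [sum_congr rfl fun j hj => by rw [min_eq_right (Nat.lt_succ_iff.1 (mem_range.1 hj))],
      geom_sum_mul, Nat.sub_self]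
    ring
  | succ s hks ih =>
    rw [sum_range_succ, add_mul, ih, min_eq_left (by omega), Nat.sub_add_comm hks]
    push_cast
    ring

theorem sum_range_sum_range_pow_min_mul_sub_one_sq {R : Type*} [CommRing R] (x : R) {r s : ℕ}
    (hrs : r ≤ s) :
    (∑ k ∈ range (r + 1), ∑ j ∈ range (s + 1), x ^ min k j) * (x - 1) ^ 2 =
      x ^ (r + 1) * (((s : R) - r + 1) * (x - 1) + 2) - (((s : R) + r + 3) * (x - 1) + 2) := by
  induction r with
  | zero =>
    simp only [zero_add, sum_range_one, Nat.zero_min, pow_zero, sum_const, card_range,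
      nsmul_eq_mul, mul_one]
    push_cast
    ring
  | succ r ih =>
    rw [sum_range_succ, add_mul, ih (by omega), sq, ← mul_assoc,
      sum_range_pow_min_mul_sub_one x hrs, Nat.cast_sub hrs]
    push_cast
    ring

/-- The probability that a random additive subgroup of `ℤ_{p^r} × ℤ_{p^s}` (`r ≤ s`)
is an ideal equals
`(r+1)(s+1)(p-1)² / (p^{r+1}[(s-r+1)(p-1)+2] - [(s+r+3)(p-1)+2])`. -/
theorem idealProb_zmod_prime_pow_prod (p : ℕ) (hp : p.Prime) (r s : ℕ) (hrs : r ≤ s) :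
    (Nat.card (Ideal (ZMod (p ^ r) × ZMod (p ^ s))) : ℚ) /
        (Nat.card (AddSubgroup (ZMod (p ^ r) × ZMod (p ^ s))) : ℚ) =
      (((r : ℚ) + 1) * ((s : ℚ) + 1) * ((p : ℚ) - 1) ^ 2) /
        ((p : ℚ) ^ (r + 1) * (((s : ℚ) - (r : ℚ) + 1) * ((p : ℚ) - 1) + 2) -
          (((s : ℚ) + (r : ℚ) + 3) * ((p : ℚ) - 1) + 2)) := by
  have hp1 : (p : ℚ) - 1 ≠ 0 := sub_ne_zero.2 (by exact_mod_cast hp.one_lt.ne')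
  rw [ZMod.card_ideal_prod_prime_pow hp, ZMod.card_addSubgroup_prod_prime_pow hp,
    ← sum_range_sum_range_pow_min_mul_sub_one_sq _ hrs, mul_div_mul_right _ _ (pow_ne_zero 2 hp1)]
  norm_cast
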